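/- Define g : ℕ₀ × (0,∞) → ℝ by g(m,r) = 2r^{2m+1}e^{−r²}/m! and H : ℝ^k → ℝ by H(x₁,…,x_k) = (2/π)^{k/2} e^{−2(x₁²+⋯+x_k²)}. Then for every ε > 0 there exists N such that for all m₁,…,m_k ∈ ℕ₀ with m_i > N for every i = 1,…,k, ∫_{(0,∞)^k} |∏_{i=1}^k g(m_i,r_i) − H(√m₁ − r₁,…,√m_k − r_k)| dr₁⋯dr_k < ε. -/

import Mathlib

/-!
Both sides are products of one-dimensional probability densities: the `i`-th factor of the first
is `sqrtGammaPDF mᵢ`, and `H` is the product of the `N(√mᵢ, 1/4)` densities. After the shift `r = √m + x`, Stirling's formula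
and `log (1 + u) = u - u²/2 + O(u³)` show that the first density converges pointwise to that of
`N(0, 1/4)`, so by Scheffé's lemma the one-dimensional L¹ distances tend to `0`. Replacing the
factors of a product density one at a time and integrating with Fubini bounds the L¹ distance of
the products by the sum of these one-dimensional distances.
-/

open MeasureTheory Real Filter Set Topology ProbabilityTheory
open scoped Nat NNReal

lemma abs_prod_sub_prod_le_sum_prod {n : ℕ} {f g : Fin n → ℝ} (hf : ∀ i, 0 ≤ f i)
    (hg : ∀ i, 0 ≤ g i) :
    |∏ i, f i - ∏ i, g i| ≤
      ∑ j, ∏ i, if i < j then f i else if i = j then |f i - g i| else g i := by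
  induction n with
  | zero => simp
  | succ n ih =>
    have ih' := ih (fun i => hf i.succ) (fun i => hg i.succ)
    simp only [Fin.prod_univ_succ, Fin.sum_univ_succ, Fin.succ_lt_succ_iff, Fin.succ_inj,
      Fin.not_lt_zero, Fin.succ_pos, Fin.succ_ne_zero, lt_self_iff_false, if_true, if_false]
    rw [← Finset.mul_sum]
    set F := ∏ i : Fin n, f i.succ
    set G := ∏ i : Fin n, g i.succ
    have hG : 0 ≤ G := Finset.prod_nonneg fun i _ => hg i.succ
    calc |f 0 * F - g 0 * G| = |(f 0 - g 0) * G + f 0 * (F - G)| := by ring_nf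
      _ ≤ |f 0 - g 0| * G + f 0 * |F - G| := by
        grw [abs_add_le, abs_mul, abs_mul, abs_of_nonneg hG, abs_of_nonneg (hf 0)]
      _ ≤ _ := by grw [ih']; exact hf 0

lemma integral_abs_prod_sub_prod_le {X : Type*} [MeasurableSpace X] {μ : Measure X}
    [SigmaFinite μ] {n : ℕ} {f g : Fin n → X → ℝ} (hf0 : ∀ i x, 0 ≤ f i x)
    (hg0 : ∀ i x, 0 ≤ g i x) (hf : ∀ i, Integrable (f i) μ) (hg : ∀ i, Integrable (g i) μ)
    (hf1 : ∀ i, ∫ x, f i x ∂μ ≤ 1) (hg1 : ∀ i, ∫ x, g i x ∂μ ≤ 1) :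
    ∫ x, |∏ i, f i (x i) - ∏ i, g i (x i)| ∂Measure.pi (fun _ => μ) ≤
      ∑ i, ∫ x, |f i x - g i x| ∂μ := by
  set T : Fin n → Fin n → X → ℝ := fun j i x =>
    if i < j then f i x else if i = j then |f i x - g i x| else g i x
  have hT0 : ∀ j i x, 0 ≤ T j i x := fun j i x => by
    simp only [T]; split_ifs <;> simp [hf0, hg0]
  have hT : ∀ j i, Integrable (T j i) μ := fun j i => by
    simp only [T]; split_ifs
    exacts [hf i, ((hf i).sub (hg i)).abs, hg i]
  have hT_int : ∀ j, ∏ i, ∫ x, T j i x ∂μ ≤ ∫ x, |f j x - g j x| ∂μ := by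
    intro j
    have hjj : T j j = fun x => |f j x - g j x| := by simp [T]
    rw [← Finset.mul_prod_erase _ _ (Finset.mem_univ j), ← hjj]
    refine mul_le_of_le_one_right (integral_nonneg (f := T j j) (hT0 j j)) ?_
    refine Finset.prod_le_one (fun i _ => integral_nonneg (f := T j i) (hT0 j i)) fun i hi => ?_
    have hij := Finset.ne_of_mem_erase hi
    simp only [T, hij, if_false]
    split_ifs
    exacts [hf1 i, hg1 i]
  calc ∫ x, |∏ i, f i (x i) - ∏ i, g i (x i)| ∂Measure.pi (fun _ => μ)
      ≤ ∫ x, ∑ j, ∏ i, T j i (x i) ∂Measure.pi (fun _ => μ) :=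
        integral_mono_of_nonneg (ae_of_all _ fun x => abs_nonneg _)
          (integrable_finsetSum _ fun j _ => Integrable.fintype_prod (hT j))
          (ae_of_all _ fun x => abs_prod_sub_prod_le_sum_prod (fun i => hf0 i _) fun i => hg0 i _)
    _ = ∑ j, ∏ i, ∫ x, T j i x ∂μ := by
        rw [integral_finsetSum _ fun j _ => Integrable.fintype_prod (hT j)]
        simp only [integral_fintype_prod_eq_prod]
    _ ≤ ∑ i, ∫ x, |f i x - g i x| ∂μ := Finset.sum_le_sum fun j _ => hT_int j

/-- Scheffé's lemma. -/
lemma tendsto_integral_abs_sub_of_tendsto_ae {X ι : Type*} [MeasurableSpace X] {μ : Measure X}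
    {l : Filter ι} [l.IsCountablyGenerated] {p : ι → X → ℝ} {q : X → ℝ}
    (hp0 : ∀ n, 0 ≤ᵐ[μ] p n) (hq0 : 0 ≤ᵐ[μ] q) (hp : ∀ n, Integrable (p n) μ)
    (hq : Integrable q μ) (h_int : ∀ n, ∫ x, p n x ∂μ = ∫ x, q x ∂μ)
    (h_lim : ∀ᵐ x ∂μ, Tendsto (fun n => p n x) l (𝓝 (q x))) :
    Tendsto (fun n => ∫ x, |p n x - q x| ∂μ) l (𝓝 0) := by
  have h_min_int : ∀ n, Integrable (fun x => min (p n x) (q x)) μ := fun n => (hp n).inf hq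
  have h_min : Tendsto (fun n => ∫ x, min (p n x) (q x) ∂μ) l (𝓝 (∫ x, q x ∂μ)) := by
    refine tendsto_integral_filter_of_dominated_convergence q
      (Eventually.of_forall fun n => (h_min_int n).aestronglyMeasurable)
      (Eventually.of_forall fun n => ?_) hq ?_
    · filter_upwards [hp0 n, hq0] with x hpx hqx
      rw [Real.norm_eq_abs, abs_of_nonneg (le_min hpx hqx)]
      exact min_le_right _ _
    · filter_upwards [h_lim] with x hx
      simpa using hx.min (tendsto_const_nhds (x := q x))
  have h_eq : ∀ n, ∫ x, |p n x - q x| ∂μ = 2 * ((∫ x, q x ∂μ) - ∫ x, min (p n x) (q x) ∂μ) := by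
    intro n
    have h_abs : ∀ a b : ℝ, |a - b| = a + b - 2 * min a b := fun a b => by
      rw [← min_add_max a b, ← max_sub_min_eq_abs']; ring
    simp_rw [h_abs]
    have h_add : Integrable (fun x => p n x + q x) μ := (hp n).add hq
    rw [integral_sub h_add ((h_min_int n).const_mul 2), integral_add (hp n) hq,
      integral_const_mul, h_int]
    ring
  simpa [h_eq] using (tendsto_const_nhds (x := ∫ x, q x ∂μ)).sub h_min |>.const_mul 2

lemma abs_log_one_add_sub_le {u : ℝ} (hu : |u| ≤ 1 / 2) :
    |log (1 + u) - (u - u ^ 2 / 2)| ≤ 2 * |u| ^ 3 := by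
  have h := abs_log_sub_add_sum_range_le (x := -u) (by rw [abs_neg]; linarith) 2
  rw [abs_neg, sub_neg_eq_add] at h
  calc |log (1 + u) - (u - u ^ 2 / 2)|
      = |(∑ i ∈ Finset.range 2, (-u) ^ (i + 1) / (i + 1)) + log (1 + u)| := by
        norm_num [Finset.sum_range_succ]; ring_nf
    _ ≤ |u| ^ 3 / (1 - |u|) := h
    _ ≤ |u| ^ 3 / (1 / 2) := by gcongr; linarith
    _ = 2 * |u| ^ 3 := by ring

lemma tendsto_mul_log_one_add_div_sub (x : ℝ) :
    Tendsto (fun s : ℝ => (2 * s ^ 2 + 1) * log (1 + x / s) - 2 * s * x) atTop (𝓝 (-x ^ 2)) := by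
  set R : ℝ → ℝ := fun s => log (1 + x / s) - (x / s - (x / s) ^ 2 / 2)
  have hinv : Tendsto (fun s : ℝ => s⁻¹) atTop (𝓝 0) := tendsto_inv_atTop_zero
  have hR : Tendsto (fun s => (2 * s ^ 2 + 1) * R s) atTop (𝓝 0) := by
    have hbound : Tendsto (fun s : ℝ => 2 * |x| ^ 3 * (2 * s⁻¹ + s⁻¹ ^ 3)) atTop (𝓝 0) := by
      simpa using ((hinv.const_mul 2).add (hinv.pow 3)).const_mul (2 * |x| ^ 3)
    refine squeeze_zero_norm' ?_ hbound
    filter_upwards [eventually_ge_atTop (2 * |x| + 1)] with s hs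
    have hs0 : 0 < s := by linarith [abs_nonneg x]
    have hu : |x / s| ≤ 1 / 2 := by
      rw [abs_div, abs_of_pos hs0, div_le_iff₀ hs0]; linarith
    calc ‖(2 * s ^ 2 + 1) * R s‖ ≤ (2 * s ^ 2 + 1) * (2 * |x / s| ^ 3) := by
          rw [Real.norm_eq_abs, abs_mul, abs_of_pos (by positivity)]
          gcongr
          exact abs_log_one_add_sub_le hu
      _ = 2 * |x| ^ 3 * (2 * s⁻¹ + s⁻¹ ^ 3) := by
          rw [abs_div, abs_of_pos hs0]; field_simp
  have hlim : Tendsto (fun s => -x ^ 2 + (2 * s ^ 2 + 1) * R s + x / s - (x / s) ^ 2 / 2) atTop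
      (𝓝 (-x ^ 2)) := by
    have hxs : Tendsto (fun s : ℝ => x / s) atTop (𝓝 0) := tendsto_const_nhds.div_atTop tendsto_id
    simpa using ((tendsto_const_nhds.add hR).add hxs).sub ((hxs.pow 2).div_const 2)
  refine hlim.congr' ?_
  filter_upwards [eventually_gt_atTop 0] with s hs
  simp only [R]
  field_simp
  ring

/-- The density of `√X` for `X ~ Γ(m + 1, 1)`. -/
noncomputable def sqrtGammaPDF (m : ℕ) : ℝ → ℝ :=
  (Ioi 0).indicator fun r => 2 * r ^ (2 * m + 1) * exp (-r ^ 2) / m !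

lemma sqrtGammaPDF_of_pos (m : ℕ) {r : ℝ} (hr : 0 < r) :
    sqrtGammaPDF m r = 2 * r ^ (2 * m + 1) * exp (-r ^ 2) / m ! :=
  indicator_of_mem hr _

lemma sqrtGammaPDF_nonneg (m : ℕ) (r : ℝ) : 0 ≤ sqrtGammaPDF m r :=
  indicator_nonneg (fun r (hr : 0 < r) => by positivity) r

lemma integrable_sqrtGammaPDF (m : ℕ) : Integrable (sqrtGammaPDF m) := by
  refine (integrable_indicator_iff measurableSet_Ioi).2 ?_
  have h := integrableOn_rpow_mul_exp_neg_mul_sq one_pos (s := (2 * m + 1 : ℕ))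
    (by linarith [Nat.cast_nonneg (α := ℝ) (2 * m + 1)])
  refine IntegrableOn.congr_fun ((h.const_mul 2).div_const (m ! : ℝ)) (fun r _ => ?_)
    measurableSet_Ioi
  simp only [rpow_natCast, neg_one_mul, mul_assoc]

lemma integral_sqrtGammaPDF (m : ℕ) : ∫ r, sqrtGammaPDF m r = 1 := by
  have h := integral_rpow_mul_exp_neg_rpow two_pos (q := (2 * m + 1 : ℕ))
    (by linarith [Nat.cast_nonneg (α := ℝ) (2 * m + 1)])
  have hm : (((2 * m + 1 : ℕ) : ℝ) + 1) / 2 = (m : ℝ) + 1 := by push_cast; ring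
  simp only [hm, Gamma_nat_eq_factorial, rpow_natCast, rpow_two] at h
  simp only [sqrtGammaPDF, integral_indicator measurableSet_Ioi, integral_div, mul_assoc,
    integral_const_mul, h]
  field_simp

lemma sqrtGammaPDF_sqrt_add {m : ℕ} (hm : m ≠ 0) {x : ℝ} (hx : 0 < √m + x) :
    sqrtGammaPDF m (√m + x) = √2 / Stirling.stirlingSeq m *
      exp ((2 * m + 1) * log (1 + x / √m) - 2 * √m * x - x ^ 2) := by
  set s := √(m : ℝ)
  have hs0 : 0 < s := by positivity
  have hsm : s ^ 2 = m := sq_sqrt (Nat.cast_nonneg m)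
  have hst : 0 < Stirling.stirlingSeq m := by
    obtain ⟨n, rfl⟩ := Nat.exists_eq_succ_of_ne_zero hm
    exact Stirling.stirlingSeq'_pos n
  have hfact : (m ! : ℝ) = Stirling.stirlingSeq m * (√2 * s * s ^ (2 * m) / exp m) := by
    rw [Stirling.stirlingSeq, div_mul_eq_mul_div, eq_div_iff (by positivity),
      ← exp_one_pow, ← hsm, sqrt_mul zero_le_two, sqrt_sq hs0.le, pow_mul, div_pow]
    field_simp
  have hpow : exp ((2 * m + 1) * log (1 + x / s)) = (s + x) ^ (2 * m + 1) / s ^ (2 * m + 1) := by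
    have : 1 + x / s = (s + x) / s := by field_simp
    rw [this, show (2 * m + 1 : ℝ) = (2 * m + 1 : ℕ) by push_cast; ring, exp_nat_mul,
      exp_log (by positivity), div_pow]
  have hsq : -(s + x) ^ 2 = -(2 * s * x) - x ^ 2 - m := by rw [← hsm]; ring
  rw [sub_sub, sub_eq_add_neg, exp_add, hpow, sqrtGammaPDF_of_pos m hx, hsq, exp_sub, exp_sub,
    hfact, neg_add, exp_add, exp_neg, exp_neg]
  field_simp
  rw [sq_sqrt zero_le_two]
  ring

lemma gaussianPDFReal_quarter (c x : ℝ) :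
    gaussianPDFReal c 4⁻¹ x = √(2 / π) * exp (-2 * (c - x) ^ 2) := by
  have h : 2 * π * ((4⁻¹ : ℝ≥0) : ℝ) = (2 / π)⁻¹ := by push_cast; field_simp; norm_num
  rw [gaussianPDFReal, h, sqrt_inv, inv_inv]
  congr 2
  push_cast
  ring

lemma prod_gaussianPDFReal_quarter {ι : Type*} [Fintype ι] (c r : ι → ℝ) :
    ∏ i, gaussianPDFReal (c i) 4⁻¹ (r i) =
      (2 / π) ^ ((Fintype.card ι : ℝ) / 2) * exp (-2 * ∑ i, (c i - r i) ^ 2) := by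
  simp only [gaussianPDFReal_quarter, Finset.prod_mul_distrib, Finset.prod_const, ← exp_sum,
    Finset.mul_sum, Finset.card_univ]
  rw [sqrt_eq_rpow, ← rpow_natCast, ← rpow_mul (by positivity)]
  ring_nf

lemma tendsto_sqrtGammaPDF_sqrt_add (x : ℝ) :
    Tendsto (fun m : ℕ => sqrtGammaPDF m (√m + x)) atTop (𝓝 (gaussianPDFReal 0 4⁻¹ x)) := by
  have h_sqrt : Tendsto (fun m : ℕ => √(m : ℝ)) atTop atTop :=
    tendsto_sqrt_atTop.comp tendsto_natCast_atTop_atTop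
  have h_stirling : Tendsto (fun m : ℕ => √2 / Stirling.stirlingSeq m) atTop (𝓝 (√2 / √π)) :=
    tendsto_const_nhds.div Stirling.tendsto_stirlingSeq_sqrt_pi (by positivity)
  have h_log : Tendsto (fun m : ℕ => (2 * m + 1) * log (1 + x / √m) - 2 * √m * x) atTop
      (𝓝 (-x ^ 2)) := by
    refine ((tendsto_mul_log_one_add_div_sub x).comp h_sqrt).congr fun m => ?_
    simp only [Function.comp, sq_sqrt (Nat.cast_nonneg m)]
  have h_lim : √2 / √π * exp (-x ^ 2 - x ^ 2) = gaussianPDFReal 0 4⁻¹ x := by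
    rw [gaussianPDFReal_quarter, ← sqrt_div zero_le_two]
    ring_nf
  rw [← h_lim]
  refine (h_stirling.mul ((h_log.sub_const (x ^ 2)).rexp)).congr' ?_
  filter_upwards [eventually_ne_atTop 0, h_sqrt.eventually_gt_atTop (-x)] with m hm hmx
  exact (sqrtGammaPDF_sqrt_add hm (by linarith)).symm

lemma tendsto_integral_abs_sqrtGammaPDF_sub_gaussianPDFReal :
    Tendsto (fun m : ℕ => ∫ r, |sqrtGammaPDF m r - gaussianPDFReal √m 4⁻¹ r|) atTop (𝓝 0) := by
  have h_shift : ∀ m : ℕ, ∫ r, |sqrtGammaPDF m r - gaussianPDFReal √m 4⁻¹ r| =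
      ∫ x, |sqrtGammaPDF m (√m + x) - gaussianPDFReal 0 4⁻¹ x| := fun m => by
    rw [← integral_add_left_eq_self _ √m]
    simp only [gaussianPDFReal_quarter, sub_add_cancel_left, zero_sub, neg_sq]
  simp only [h_shift]
  refine tendsto_integral_abs_sub_of_tendsto_ae (fun m => ae_of_all _ fun x => ?_)
    (ae_of_all _ (gaussianPDFReal_nonneg 0 4⁻¹)) (fun m => ?_) (integrable_gaussianPDFReal 0 4⁻¹)
    (fun m => ?_) (ae_of_all _ tendsto_sqrtGammaPDF_sqrt_add)
  · exact sqrtGammaPDF_nonneg m _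
  · exact (integrable_sqrtGammaPDF m).comp_add_left √m
  · rw [integral_add_left_eq_self (sqrtGammaPDF m), integral_sqrtGammaPDF,
      integral_gaussianPDFReal_eq_one 0 (by norm_num)]

/-- With `g(m,r) = 2 r^{2m+1} e^{−r²}/m!` and
`H(x₁,…,x_k) = (2/π)^{k/2} e^{−2(x₁²+⋯+x_k²)}`, for every `ε > 0` there is `N` such that
whenever all `m_i > N`,
`∫_{(0,∞)^k} |∏ᵢ g(mᵢ,rᵢ) − H(√m₁ − r₁,…,√m_k − r_k)| dr < ε`. -/
theorem stmt13 (k : ℕ) (ε : ℝ) (hε : 0 < ε) :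
    ∃ N : ℕ, ∀ m : Fin k → ℕ, (∀ i, N < m i) →
      (∫ r in Set.univ.pi fun _ : Fin k => Set.Ioi (0 : ℝ),
          |(∏ i, 2 * r i ^ (2 * m i + 1) * Real.exp (-(r i) ^ 2) / ((m i).factorial : ℝ)) -
            (2 / Real.pi) ^ ((k : ℝ) / 2) *
              Real.exp (-2 * ∑ i, (Real.sqrt (m i) - r i) ^ 2)|)
        < ε := by
  obtain ⟨N, hN⟩ := eventually_atTop.1 <|
    tendsto_integral_abs_sqrtGammaPDF_sub_gaussianPDFReal.eventually
      (gt_mem_nhds (show 0 < ε / (k + 1) by positivity))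
  refine ⟨N, fun m hm => ?_⟩
  have h_int : Integrable fun r : Fin k → ℝ =>
      |∏ i, sqrtGammaPDF (m i) (r i) - ∏ i, gaussianPDFReal √(m i) 4⁻¹ (r i)| :=
    ((Integrable.fintype_prod fun i => integrable_sqrtGammaPDF (m i)).sub
      (Integrable.fintype_prod fun i => integrable_gaussianPDFReal _ _)).abs
  calc _ = ∫ r in Set.univ.pi fun _ : Fin k => Set.Ioi (0 : ℝ),
          |∏ i, sqrtGammaPDF (m i) (r i) - ∏ i, gaussianPDFReal √(m i) 4⁻¹ (r i)| := by
        refine setIntegral_congr_fun (MeasurableSet.univ_pi fun _ => measurableSet_Ioi)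
          fun r hr => ?_
        simp only [prod_gaussianPDFReal_quarter, Fintype.card_fin,
          sqrtGammaPDF_of_pos _ (hr _ (mem_univ _))]
    _ ≤ ∫ r : Fin k → ℝ, |∏ i, sqrtGammaPDF (m i) (r i) - ∏ i, gaussianPDFReal √(m i) 4⁻¹ (r i)| :=
        setIntegral_le_integral h_int (ae_of_all _ fun _ => abs_nonneg _)
    _ ≤ ∑ i, ∫ x, |sqrtGammaPDF (m i) x - gaussianPDFReal √(m i) 4⁻¹ x| :=
        integral_abs_prod_sub_prod_le (fun i => sqrtGammaPDF_nonneg _)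
          (fun i => gaussianPDFReal_nonneg _ _) (fun i => integrable_sqrtGammaPDF _)
          (fun i => integrable_gaussianPDFReal _ _) (fun i => (integral_sqrtGammaPDF _).le)
          (fun i => (integral_gaussianPDFReal_eq_one _ (by norm_num)).le)
    _ ≤ ∑ _i : Fin k, ε / (k + 1) := Finset.sum_le_sum fun i _ => (hN _ (hm i).le).le
    _ < ε := by
        rw [Finset.sum_const, Finset.card_univ, Fintype.card_fin, nsmul_eq_mul,
          mul_div_assoc', div_lt_iff₀ (by positivity)]
        nlinarith
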